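/- Let (p_t, P_T) be a drift process. Then (p_t, P_T) has proper drift if and only if (p_t, P_T) has model drift, i.e. if and only if there exist sets A, B ∈ ℬ with P_T(A) > 0, P_T(B) > 0 and p_A ≠ p_B. -/

import Mathlib

/-!
A driftless representative of the joint law `P_T ⊗ p` has first marginal `P_T`, so it is
`P_T`-a.e. a constant kernel `ν`, and comparing second marginals forces `ν = p ∘ P_T = p_𝔗`.
Hence no proper drift means `P_T ⊗ p = P_T × p_𝔗`. Since
`(P_T ⊗ p)(C ×ˢ D) = P_T(C) p_C(D)`, this product identity holds iff `p_C = p_𝔗` for every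
non-null `C`, i.e. iff all invariant models coincide.
-/

open MeasureTheory ProbabilityTheory

/-- A drift process has *no drift* if `p s = p t` for `(P_T × P_T)`-a.e. pair `(s, t)`. -/
def HasNoDrift {𝔗 𝔛 : Type*} [MeasurableSpace 𝔗] [MeasurableSpace 𝔛]
    (p : Kernel 𝔗 𝔛) (PT : Measure 𝔗) : Prop :=
  ∀ᵐ st ∂(PT.prod PT), p st.1 = p st.2

/-- A drift process `(p_t, P_T)` has *no proper drift* if there exists a drift process
`(p'_t, P'_T)` with the same joint measure `p ⊗ P_T = p' ⊗ P'_T` that has no drift. -/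
def HasNoProperDrift {𝔗 𝔛 : Type*} [MeasurableSpace 𝔗] [MeasurableSpace 𝔛]
    (p : Kernel 𝔗 𝔛) (PT : Measure 𝔗) : Prop :=
  ∃ (p' : Kernel 𝔗 𝔛) (PT' : Measure 𝔗), IsMarkovKernel p' ∧ IsProbabilityMeasure PT' ∧
    PT' ⊗ₘ p' = PT ⊗ₘ p ∧ HasNoDrift p' PT'

/-- The `𝔗`-invariant model of a drift process over a non-null set `A`:
the probability measure `p_A(D) = P_T(A)⁻¹ ∫_A p_t(D) dP_T(t)`. -/
noncomputable def invariantModel {𝔗 𝔛 : Type*} [MeasurableSpace 𝔗] [MeasurableSpace 𝔛]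
    (p : Kernel 𝔗 𝔛) (PT : Measure 𝔗) (A : Set 𝔗) : Measure 𝔛 :=
  (PT A)⁻¹ • (PT.restrict A).bind (fun t => p t)

section

variable {𝔗 𝔛 : Type*} [MeasurableSpace 𝔗] [MeasurableSpace 𝔛]

lemma invariantModel_apply (p : Kernel 𝔗 𝔛) (PT : Measure 𝔗) (A : Set 𝔗) {D : Set 𝔛}
    (hD : MeasurableSet D) :
    invariantModel p PT A D = (PT A)⁻¹ * ∫⁻ t in A, p t D ∂PT := by
  rw [invariantModel, Measure.smul_apply, Measure.bind_apply hD p.measurable.aemeasurable,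
    smul_eq_mul]

lemma invariantModel_univ (p : Kernel 𝔗 𝔛) (PT : Measure 𝔗) [IsProbabilityMeasure PT] :
    invariantModel p PT Set.univ = p ∘ₘ PT := by
  simp [invariantModel]

lemma HasNoDrift.exists_ae_eq_const {p : Kernel 𝔗 𝔛} [IsMarkovKernel p] {PT : Measure 𝔗}
    [SFinite PT] [NeZero PT] (h : HasNoDrift p PT) :
    ∃ ν : Measure 𝔛, IsProbabilityMeasure ν ∧ p =ᵐ[PT] Kernel.const 𝔗 ν := by
  obtain ⟨s, hs⟩ := (Measure.ae_ae_of_ae_prod h).exists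
  exact ⟨p s, inferInstance, hs.mono fun t ht => ht.symm⟩

lemma hasNoProperDrift_iff_compProd_eq_prod (p : Kernel 𝔗 𝔛) [IsMarkovKernel p]
    (PT : Measure 𝔗) [IsProbabilityMeasure PT] :
    HasNoProperDrift p PT ↔ PT ⊗ₘ p = PT.prod (p ∘ₘ PT) := by
  constructor
  · rintro ⟨p', PT', hp', hPT', hjoint, hdrift⟩
    obtain rfl : PT = PT' := by
      rw [← Measure.fst_compProd PT' p', hjoint, Measure.fst_compProd]
    obtain ⟨ν, hν, hp'ν⟩ := hdrift.exists_ae_eq_const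
    have hprod : PT ⊗ₘ p = PT.prod ν := by
      rw [← hjoint, Measure.compProd_congr hp'ν, Measure.compProd_const]
    have hν_eq : ν = p ∘ₘ PT := by
      rw [← Measure.snd_prod (μ := PT) (ν := ν), ← hprod, Measure.snd_compProd]
    rw [hprod, hν_eq]
  · intro h
    exact ⟨Kernel.const 𝔗 (p ∘ₘ PT), PT, inferInstance, inferInstance,
      by rw [Measure.compProd_const, h], Filter.Eventually.of_forall fun _ => rfl⟩

lemma compProd_apply_prod_eq_mul_invariantModel (p : Kernel 𝔗 𝔛) [IsSFiniteKernel p]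
    (PT : Measure 𝔗) [IsFiniteMeasure PT] {C : Set 𝔗} {D : Set 𝔛} (hC : MeasurableSet C)
    (hD : MeasurableSet D) :
    (PT ⊗ₘ p) (C ×ˢ D) = PT C * invariantModel p PT C D := by
  rw [Measure.compProd_apply_prod hC hD, invariantModel_apply p PT C hD, ← mul_assoc]
  rcases eq_or_ne (PT C) 0 with hC₀ | hC₀
  · rw [setLIntegral_measure_zero C _ hC₀, mul_zero]
  · rw [ENNReal.mul_inv_cancel hC₀ (measure_ne_top PT C), one_mul]

lemma compProd_eq_prod_iff_forall_invariantModel_eq (p : Kernel 𝔗 𝔛) [IsSFiniteKernel p]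
    (PT : Measure 𝔗) [IsFiniteMeasure PT] (ν : Measure 𝔛) [SigmaFinite ν] :
    PT ⊗ₘ p = PT.prod ν ↔
      ∀ C, MeasurableSet C → 0 < PT C → invariantModel p PT C = ν := by
  constructor
  · intro h C hC hC₀
    ext D hD
    have hrect := compProd_apply_prod_eq_mul_invariantModel p PT hC hD
    rw [h, Measure.prod_prod] at hrect
    exact (ENNReal.mul_right_inj hC₀.ne' (measure_ne_top PT C)).mp hrect.symm
  · intro h
    refine (Measure.prod_eq fun C D hC hD => ?_).symm
    rw [compProd_apply_prod_eq_mul_invariantModel p PT hC hD]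
    rcases eq_zero_or_pos (PT C) with hC₀ | hC₀
    · rw [hC₀, zero_mul, zero_mul]
    · rw [h C hC hC₀]

end

/-- A drift process has proper drift iff it has model drift, i.e. iff there exist
measurable non-null sets `A, B` with `p_A ≠ p_B`. -/
theorem properDrift_iff_modelDrift {𝔗 𝔛 : Type*} [MeasurableSpace 𝔗] [MeasurableSpace 𝔛]
    (p : Kernel 𝔗 𝔛) [IsMarkovKernel p] (PT : Measure 𝔗) [IsProbabilityMeasure PT] :
    ¬ HasNoProperDrift p PT ↔
      ∃ A B : Set 𝔗, MeasurableSet A ∧ MeasurableSet B ∧ 0 < PT A ∧ 0 < PT B ∧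
        invariantModel p PT A ≠ invariantModel p PT B := by
  rw [not_iff_comm, hasNoProperDrift_iff_compProd_eq_prod,
    compProd_eq_prod_iff_forall_invariantModel_eq]
  simp only [not_exists, not_and, not_not]
  constructor
  · intro h C hC hC₀
    rw [h C Set.univ hC .univ hC₀ (by simp), invariantModel_univ]
  · intro h A B hA hB hA₀ hB₀
    rw [h A hA hA₀, h B hB hB₀]
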